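/- For complex q, z with |q| < 1 and suitable convergence, Σ_{n≥0} zⁿ q^{2n²+2n} / ((q; q²)_{n+1} (zq; q²)_{n+1}) = Σ_{n≥0} qⁿ / (zq; q²)_{n+1}. -/

import Mathlib

/-
Both sides, as functions `F` of `z` on the closed unit disc, satisfy the q-difference equation
`(1 - z q) F(z) = 1 + q F(z q²)`: for the right side by shifting the index, for the left side
because its terms satisfy `(1 - z q) tₙ₊₁(z) - q tₙ(z q²) = (1 - z q) (cₙ₊₁ - cₙ)` with
`cₙ = q^(2n+1) tₙ(z)`, which telescopes. As `|(a; q²)ₙ|` is bounded below uniformly in `n` and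
`|a| ≤ |q|`, both sides are bounded on the disc, and their difference `D` satisfies
`(z q; q²)_N D(z) = q^N D(z q^(2N))`, which tends to `0`.
-/

open scoped BigOperators

/-- Finite q-Pochhammer symbol `(a; q)_n`. -/
noncomputable def qPoch (a q : ℂ) (n : ℕ) : ℂ :=
  ∏ k ∈ Finset.range n, (1 - a * q ^ k)

/-- Infinite q-Pochhammer symbol `(a; q)_∞`. -/
noncomputable def qPochInf (a q : ℂ) : ℂ :=
  ∏' k : ℕ, (1 - a * q ^ k)

open Filter Finset

lemma norm_mul_le_of_norm_le_one {w : ℂ} (hw : ‖w‖ ≤ 1) (a : ℂ) : ‖w * a‖ ≤ ‖a‖ := by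
  rw [norm_mul]; exact mul_le_of_le_one_left (norm_nonneg a) hw

lemma norm_pow_le_one {x : ℂ} (hx : ‖x‖ ≤ 1) (n : ℕ) : ‖x ^ n‖ ≤ 1 := by
  rw [norm_pow]; exact pow_le_one₀ (norm_nonneg x) hx

lemma qPoch_succ (a Q : ℂ) (n : ℕ) : qPoch a Q (n + 1) = qPoch a Q n * (1 - a * Q ^ n) :=
  prod_range_succ _ _

lemma qPoch_succ' (a Q : ℂ) (n : ℕ) : qPoch a Q (n + 1) = (1 - a) * qPoch (a * Q) Q n := by
  simp only [qPoch, prod_range_succ', pow_zero, mul_one, mul_assoc, ← pow_succ']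
  ring

lemma exists_pos_le_prod_one_sub {t : ℕ → ℝ} (ht₀ : ∀ k, 0 ≤ t k) (ht₁ : ∀ k, t k < 1)
    (ht : Summable t) : ∃ C > 0, ∀ n, C ≤ ∏ k ∈ range n, (1 - t k) := by
  have hpos : ∀ k, 0 < 1 - t k := fun k => sub_pos.2 (ht₁ k)
  have hlog : Summable fun k => Real.log (1 - t k) := by
    simpa [sub_eq_add_neg] using Real.summable_log_one_add_of_summable ht.neg
  have hprod : HasProd (fun k => 1 - t k) (∏' k, (1 - t k)) :=
    (Real.multipliable_of_summable_log hpos hlog).hasProd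
  have hanti : Antitone fun n => ∏ k ∈ range n, (1 - t k) :=
    antitone_nat_of_succ_le fun n => by
      rw [prod_range_succ]
      exact mul_le_of_le_one_right (prod_nonneg fun k _ => (hpos k).le)
        (by linarith [ht₀ n])
  refine ⟨∏' k, (1 - t k), ?_, fun n => hanti.le_of_tendsto hprod.tendsto_prod_nat n⟩
  rw [← Real.rexp_tsum_eq_tprod hpos hlog]
  exact Real.exp_pos _

lemma exists_pos_le_norm_qPoch {Q : ℂ} (hQ : ‖Q‖ < 1) {ρ : ℝ} (hρ₀ : 0 ≤ ρ) (hρ₁ : ρ < 1) :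
    ∃ C > 0, ∀ a : ℂ, ‖a‖ ≤ ρ → ∀ n, C ≤ ‖qPoch a Q n‖ := by
  have hQ₁ : ∀ k, ‖Q‖ ^ k ≤ 1 := fun k => pow_le_one₀ (norm_nonneg Q) hQ.le
  obtain ⟨C, hC, hCle⟩ := exists_pos_le_prod_one_sub (t := fun k => ρ * ‖Q‖ ^ k)
    (fun k => by positivity)
    (fun k => lt_of_le_of_lt (mul_le_of_le_one_right hρ₀ (hQ₁ k)) hρ₁)
    ((summable_geometric_of_lt_one (norm_nonneg Q) hQ).mul_left ρ)
  refine ⟨C, hC, fun a ha n => (hCle n).trans ?_⟩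
  rw [qPoch, norm_prod]
  refine prod_le_prod (fun k _ => ?_) fun k _ => ?_
  · linarith [mul_le_of_le_one_right hρ₀ (hQ₁ k)]
  · calc 1 - ρ * ‖Q‖ ^ k ≤ ‖(1 : ℂ)‖ - ‖a * Q ^ k‖ := by
          rw [norm_one, norm_mul, norm_pow]
          gcongr
      _ ≤ ‖1 - a * Q ^ k‖ := norm_sub_norm_le _ _

lemma one_sub_mul_pow_ne_zero {a Q : ℂ} (ha : ‖a‖ < 1) (hQ : ‖Q‖ ≤ 1) (k : ℕ) :
    1 - a * Q ^ k ≠ 0 := by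
  refine (isUnit_one_sub_of_norm_lt_one ?_).ne_zero
  rw [norm_mul, norm_pow]
  exact (mul_le_of_le_one_right (norm_nonneg a) (pow_le_one₀ (norm_nonneg Q) hQ)).trans_lt ha

lemma qPoch_ne_zero {a Q : ℂ} (ha : ‖a‖ < 1) (hQ : ‖Q‖ ≤ 1) (n : ℕ) : qPoch a Q n ≠ 0 :=
  prod_ne_zero_iff.2 fun k _ => one_sub_mul_pow_ne_zero ha hQ k

noncomputable def lhsTerm (q w : ℂ) (n : ℕ) : ℂ :=
  w ^ n * q ^ (2 * n ^ 2 + 2 * n) / (qPoch q (q ^ 2) (n + 1) * qPoch (w * q) (q ^ 2) (n + 1))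

noncomputable def rhsTerm (q w : ℂ) (n : ℕ) : ℂ :=
  q ^ n / qPoch (w * q) (q ^ 2) (n + 1)

lemma lhsTerm_zero {q : ℂ} (hq : ‖q‖ < 1) {w : ℂ} (hw : ‖w‖ ≤ 1) :
    (1 - w * q) * ((1 - q) * lhsTerm q w 0) = 1 := by
  have h1 := (isUnit_one_sub_of_norm_lt_one hq).ne_zero
  have h2 := (isUnit_one_sub_of_norm_lt_one ((norm_mul_le_of_norm_le_one hw q).trans_lt hq)).ne_zero
  have h0 : lhsTerm q w 0 = 1 / ((1 - q) * (1 - w * q)) := by simp [lhsTerm, qPoch]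
  rw [h0]
  field_simp

lemma lhsTerm_recurrence {q : ℂ} (hq : ‖q‖ < 1) {w : ℂ} (hw : ‖w‖ ≤ 1) (n : ℕ) :
    (1 - w * q) * lhsTerm q w (n + 1) - q * lhsTerm q (w * q ^ 2) n =
      (1 - w * q) * (q ^ (2 * n + 3) * lhsTerm q w (n + 1) - q ^ (2 * n + 1) * lhsTerm q w n) := by
  have hQ : ‖q ^ 2‖ ≤ 1 := norm_pow_le_one hq.le 2
  have hwq : ‖w * q‖ < 1 := (norm_mul_le_of_norm_le_one hw q).trans_lt hq
  have hwqQ : ‖w * q * q ^ 2‖ < 1 := by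
    rw [mul_comm]; exact (norm_mul_le_of_norm_le_one hQ _).trans_lt hwq
  have hA := qPoch_ne_zero hq hQ (n + 1)
  have hB := qPoch_ne_zero hwqQ hQ n
  have h1 := (isUnit_one_sub_of_norm_lt_one hwq).ne_zero
  have h2 := one_sub_mul_pow_ne_zero hq hQ (n + 1)
  have h3 := one_sub_mul_pow_ne_zero hwqQ hQ n
  simp only [lhsTerm]
  rw [qPoch_succ q _ (n + 1), qPoch_succ' (w * q) _ (n + 1), qPoch_succ' (w * q) _ n,
    qPoch_succ (w * q * q ^ 2) _ n, show w * q ^ 2 * q = w * q * q ^ 2 by ring,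
    qPoch_succ (w * q * q ^ 2) _ n]
  generalize qPoch q (q ^ 2) (n + 1) = A at *
  generalize qPoch (w * q * q ^ 2) (q ^ 2) n = B at *
  -- `field_simp` would not recognise this factor as `h3` once it has normalised it
  generalize hF : 1 - w * q * q ^ 2 * (q ^ 2) ^ n = F at *
  field_simp
  rw [← hF]
  ring

lemma norm_lhsTerm_le {q : ℂ} (hq : ‖q‖ ≤ 1) {C : ℝ} (hC₀ : 0 < C)
    (hC : ∀ a : ℂ, ‖a‖ ≤ ‖q‖ → ∀ n, C ≤ ‖qPoch a (q ^ 2) n‖) {w : ℂ} (hw : ‖w‖ ≤ 1) (n : ℕ) :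
    ‖lhsTerm q w n‖ ≤ (C * C)⁻¹ * ‖q‖ ^ n := by
  have hnum : ‖w‖ ^ n * ‖q‖ ^ (2 * n ^ 2 + 2 * n) ≤ 1 * ‖q‖ ^ n :=
    mul_le_mul (pow_le_one₀ (norm_nonneg w) hw)
      (pow_le_pow_of_le_one (norm_nonneg q) hq (by nlinarith)) (by positivity) zero_le_one
  rw [lhsTerm, norm_div, norm_mul, norm_mul, norm_pow, norm_pow, inv_mul_eq_div,
    ← one_mul (‖q‖ ^ n)]
  exact div_le_div₀ (by positivity) hnum (by positivity)
    (mul_le_mul (hC q le_rfl _) (hC _ (norm_mul_le_of_norm_le_one hw q) _) hC₀.le (norm_nonneg _))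

lemma norm_rhsTerm_le {q : ℂ} {C : ℝ} (hC₀ : 0 < C)
    (hC : ∀ a : ℂ, ‖a‖ ≤ ‖q‖ → ∀ n, C ≤ ‖qPoch a (q ^ 2) n‖) {w : ℂ} (hw : ‖w‖ ≤ 1) (n : ℕ) :
    ‖rhsTerm q w n‖ ≤ C⁻¹ * ‖q‖ ^ n := by
  rw [rhsTerm, norm_div, norm_pow, inv_mul_eq_div]
  exact div_le_div₀ (by positivity) le_rfl hC₀ (hC _ (norm_mul_le_of_norm_le_one hw q) _)

lemma summable_of_norm_le_geometric {f : ℕ → ℂ} {r B : ℝ} (hr₀ : 0 ≤ r) (hr₁ : r < 1)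
    (hf : ∀ n, ‖f n‖ ≤ B * r ^ n) : Summable f :=
  .of_norm_bounded ((summable_geometric_of_lt_one hr₀ hr₁).mul_left B) hf

lemma norm_tsum_le_of_norm_le_geometric {f : ℕ → ℂ} {r B : ℝ} (hr₀ : 0 ≤ r) (hr₁ : r < 1)
    (hf : ∀ n, ‖f n‖ ≤ B * r ^ n) : ‖∑' n, f n‖ ≤ B * (1 - r)⁻¹ :=
  tsum_of_norm_bounded ((hasSum_geometric_of_lt_one hr₀ hr₁).mul_left B) hf

lemma one_sub_mul_tsum_rhsTerm {q : ℂ} (hq : ‖q‖ < 1) {C : ℝ} (hC₀ : 0 < C)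
    (hC : ∀ a : ℂ, ‖a‖ ≤ ‖q‖ → ∀ n, C ≤ ‖qPoch a (q ^ 2) n‖) {w : ℂ} (hw : ‖w‖ ≤ 1)
    (hw' : ‖w * q ^ 2‖ ≤ 1) :
    (1 - w * q) * ∑' n, rhsTerm q w n = 1 + q * ∑' n, rhsTerm q (w * q ^ 2) n := by
  have hwq : 1 - w * q ≠ 0 :=
    (isUnit_one_sub_of_norm_lt_one ((norm_mul_le_of_norm_le_one hw q).trans_lt hq)).ne_zero
  set g : ℕ → ℂ := fun n => q ^ n / qPoch (w * q * q ^ 2) (q ^ 2) n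
  have hg : HasSum g (g 0 + q * ∑' n, rhsTerm q (w * q ^ 2) n) := by
    have hshift : (fun n => g (n + 1)) = fun n => q * rhsTerm q (w * q ^ 2) n := by
      ext n
      rw [rhsTerm, show w * q ^ 2 * q = w * q * q ^ 2 by ring]
      ring
    refine HasSum.zero_add ?_
    rw [hshift]
    exact (summable_of_norm_le_geometric (norm_nonneg q) hq
      (norm_rhsTerm_le hC₀ hC hw')).hasSum.mul_left q
  rw [show g 0 = 1 by simp [g, qPoch]] at hg
  rw [← hg.tsum_eq, ← tsum_mul_left]
  refine tsum_congr fun n => ?_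
  rw [rhsTerm, qPoch_succ', mul_div_assoc', mul_div_mul_left _ _ hwq]

lemma one_sub_mul_tsum_lhsTerm {q : ℂ} (hq : ‖q‖ < 1) {C : ℝ} (hC₀ : 0 < C)
    (hC : ∀ a : ℂ, ‖a‖ ≤ ‖q‖ → ∀ n, C ≤ ‖qPoch a (q ^ 2) n‖) {w : ℂ} (hw : ‖w‖ ≤ 1)
    (hw' : ‖w * q ^ 2‖ ≤ 1) :
    (1 - w * q) * ∑' n, lhsTerm q w n = 1 + q * ∑' n, lhsTerm q (w * q ^ 2) n := by
  have ht := summable_of_norm_le_geometric (norm_nonneg q) hq (norm_lhsTerm_le hq.le hC₀ hC hw)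
  have ht' := summable_of_norm_le_geometric (norm_nonneg q) hq (norm_lhsTerm_le hq.le hC₀ hC hw')
  set c : ℕ → ℂ := fun n => q ^ (2 * n + 1) * lhsTerm q w n
  have hc : Summable c :=
    summable_of_norm_le_geometric (norm_nonneg q) hq fun n =>
      (norm_mul_le_of_norm_le_one (norm_pow_le_one hq.le _) _).trans
        (norm_lhsTerm_le hq.le hC₀ hC hw n)
  have key : ∑' n, ((1 - w * q) * lhsTerm q w (n + 1) - q * lhsTerm q (w * q ^ 2) n) =
      ∑' n, (1 - w * q) * (c (n + 1) - c n) :=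
    tsum_congr (lhsTerm_recurrence hq hw)
  rw [Summable.tsum_sub (((summable_nat_add_iff 1).2 ht).mul_left _) (ht'.mul_left q),
    tsum_mul_left, tsum_mul_left, tsum_mul_left,
    Summable.tsum_sub ((summable_nat_add_iff 1).2 hc) hc] at key
  linear_combination (1 - w * q) * ht.tsum_eq_zero_add + key - (1 - w * q) * hc.tsum_eq_zero_add
    + lhsTerm_zero hq hw

lemma qPoch_mul_eq_pow_mul {q : ℂ} (hq : ‖q‖ ≤ 1) {D : ℂ → ℂ}
    (hD : ∀ w : ℂ, ‖w‖ ≤ 1 → (1 - w * q) * D w = q * D (w * q ^ 2)) {z : ℂ} (hz : ‖z‖ ≤ 1)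
    (N : ℕ) :
    qPoch (z * q) (q ^ 2) N * D z = q ^ N * D (z * q ^ (2 * N)) := by
  induction N with
  | zero => simp [qPoch]
  | succ N ih =>
    have hzN : ‖z * q ^ (2 * N)‖ ≤ 1 :=
      (norm_mul_le_of_norm_le_one hz _).trans (norm_pow_le_one hq _)
    calc qPoch (z * q) (q ^ 2) (N + 1) * D z
        = (1 - z * q ^ (2 * N) * q) * (qPoch (z * q) (q ^ 2) N * D z) := by rw [qPoch_succ]; ring
      _ = q ^ N * ((1 - z * q ^ (2 * N) * q) * D (z * q ^ (2 * N))) := by rw [ih]; ring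
      _ = q ^ (N + 1) * D (z * q ^ (2 * (N + 1))) := by
        rw [hD _ hzN, show z * q ^ (2 * N) * q ^ 2 = z * q ^ (2 * (N + 1)) by ring]; ring

lemma eq_zero_of_one_sub_mul_eq {q : ℂ} (hq : ‖q‖ < 1) {D : ℂ → ℂ}
    (hD : ∀ w : ℂ, ‖w‖ ≤ 1 → (1 - w * q) * D w = q * D (w * q ^ 2)) {M : ℝ}
    (hM : ∀ w : ℂ, ‖w‖ ≤ 1 → ‖D w‖ ≤ M) {z : ℂ} (hz : ‖z‖ ≤ 1) {C : ℝ} (hC₀ : 0 < C)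
    (hC : ∀ N, C ≤ ‖qPoch (z * q) (q ^ 2) N‖) : D z = 0 := by
  have hbound : ∀ N : ℕ, C * ‖D z‖ ≤ ‖q‖ ^ N * M := fun N => calc
    C * ‖D z‖ ≤ ‖qPoch (z * q) (q ^ 2) N * D z‖ := by
        rw [norm_mul]; exact mul_le_mul_of_nonneg_right (hC N) (norm_nonneg _)
    _ = ‖q‖ ^ N * ‖D (z * q ^ (2 * N))‖ := by
        rw [qPoch_mul_eq_pow_mul hq.le hD hz, norm_mul, norm_pow]
    _ ≤ ‖q‖ ^ N * M := by
        gcongr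
        exact hM _ ((norm_mul_le_of_norm_le_one hz _).trans (norm_pow_le_one hq.le _))
  have hlim : Tendsto (fun N : ℕ => ‖q‖ ^ N * M) atTop (nhds 0) := by
    simpa using (tendsto_pow_atTop_nhds_zero_of_lt_one (norm_nonneg q) hq).mul_const M
  exact norm_le_zero_iff.1 (nonpos_of_mul_nonpos_right (ge_of_tendsto' hlim hbound) hC₀)

theorem omega_spec_2_10_general (q z : ℂ) (hq : ‖q‖ < 1) (hz : ‖z‖ ≤ 1) :
    ∑' n : ℕ, z ^ n * q ^ (2 * n ^ 2 + 2 * n) /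
        (qPoch q (q ^ 2) (n + 1) * qPoch (z * q) (q ^ 2) (n + 1))
      = ∑' n : ℕ, q ^ n / qPoch (z * q) (q ^ 2) (n + 1) := by
  have hq₂ : ‖q ^ 2‖ < 1 := by rw [norm_pow]; exact pow_lt_one₀ (norm_nonneg q) hq two_ne_zero
  obtain ⟨C, hC₀, hC⟩ := exists_pos_le_norm_qPoch hq₂ (norm_nonneg q) hq
  have hscale : ∀ w : ℂ, ‖w‖ ≤ 1 → ‖w * q ^ 2‖ ≤ 1 := fun w hw =>
    (norm_mul_le_of_norm_le_one hw _).trans hq₂.le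
  refine sub_eq_zero.1 <| eq_zero_of_one_sub_mul_eq
    (D := fun w => ∑' n, lhsTerm q w n - ∑' n, rhsTerm q w n)
    (M := (C * C)⁻¹ * (1 - ‖q‖)⁻¹ + C⁻¹ * (1 - ‖q‖)⁻¹) hq (fun w hw => ?_) (fun w hw => ?_) hz hC₀
    (hC _ (norm_mul_le_of_norm_le_one hz q))
  · linear_combination one_sub_mul_tsum_lhsTerm hq hC₀ hC hw (hscale w hw) -
      one_sub_mul_tsum_rhsTerm hq hC₀ hC hw (hscale w hw)
  · exact (norm_sub_le _ _).trans (add_le_add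
      (norm_tsum_le_of_norm_le_geometric (norm_nonneg q) hq (norm_lhsTerm_le hq.le hC₀ hC hw))
      (norm_tsum_le_of_norm_le_geometric (norm_nonneg q) hq (norm_rhsTerm_le hC₀ hC hw)))

theorem omega_spec_2_10 (q z : ℂ) (hq : ‖q‖ < 1) (hz : ‖z‖ ≤ 1)
    (hden : ∀ k : ℕ, 1 - z * q ^ (2 * k + 1) ≠ 0) :
    ∑' n : ℕ, z ^ n * q ^ (2 * n ^ 2 + 2 * n) /
        (qPoch q (q ^ 2) (n + 1) * qPoch (z * q) (q ^ 2) (n + 1))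
      = ∑' n : ℕ, q ^ n / qPoch (z * q) (q ^ 2) (n + 1) :=
  omega_spec_2_10_general q z hq hz
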